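/- Let y1, y2, y3 : (0,1) → ℝ be twice differentiable and set K = exp∘y1, phi1 = exp∘y2, phi2 = exp∘y3, and F = 3 − 2 K^{-1/3}(phi1^2 phi2)^{1/3} − 2 K^{-1/3}(phi1^{-1} phi2)^{1/3} − 2 K^{-1/3}(phi1 phi2^2)^{-1/3} + K^{-1/3} phi1^{-4/3} phi2^{-2/3} + K^{-1/3} phi1^{2/3} phi2^{-2/3} + K^{-1/3} phi1^{2/3} phi2^{4/3}. Suppose that on (0,1) the three equations hold: (G2) y1'' − x^{-1}(5+7x^2)(1−x^2)^{-1} y1' + (1/2)(y1')^2 + 16(1−x^2)^{-2} F = 0; (G3) y2'' − 2x^{-1}(1+2x^2)(1−x^2)^{-1} y2' + (1/2) y1' y2' + 32(1−x^2)^{-2} K^{-1/3}[ phi1^{2/3} phi2^{1/3} − phi1^{-1/3} phi2^{1/3} − phi1^{2/3} phi2^{-2/3} + phi1^{-4/3} phi2^{-2/3} ] = 0; (G4) y3'' − 2x^{-1}(1+2x^2)(1−x^2)^{-1} y3' + (1/2) y1' y3' + 32(1−x^2)^{-2} K^{-1/3}[ phi1^{-1/3} phi2^{1/3} − phi1^{-1/3}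 phi2^{-2/3} − phi1^{2/3} phi2^{4/3} + phi1^{2/3} phi2^{-2/3} ] = 0. Define Phi(x) = (y1')^2 − [(y2')^2 + y2' y3' + (y3')^2] − 12 x^{-1}(1+x^2)(1−x^2)^{-1} y1' + 48(1−x^2)^{-2} F. Then Phi is differentiable on (0,1) and satisfies Phi'(x) + ( y1'(x) − x^{-1}(4+8x^2)(1−x^2)^{-1} ) Phi(x) = 0 for all x ∈ (0,1). -/

import Mathlib

open Real Set

/-- The curvature quantity `F` of the generalized Berger Einstein ODE system, with
`K = exp ∘ y1`, `phi1 = exp ∘ y2`, `phi2 = exp ∘ y3`: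
`F = 3 − 2K^{-1/3}(phi1² phi2)^{1/3} − 2K^{-1/3}(phi1⁻¹ phi2)^{1/3}
  − 2K^{-1/3}(phi1 phi2²)^{-1/3} + K^{-1/3} phi1^{-4/3} phi2^{-2/3}
  + K^{-1/3} phi1^{2/3} phi2^{-2/3} + K^{-1/3} phi1^{2/3} phi2^{4/3}`. -/
noncomputable def GBergerF (y1 y2 y3 : ℝ → ℝ) (x : ℝ) : ℝ :=
  3 - 2 * Real.exp (y1 x) ^ (-(1:ℝ)/3) * (Real.exp (y2 x) ^ 2 * Real.exp (y3 x)) ^ ((1:ℝ)/3)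
    - 2 * Real.exp (y1 x) ^ (-(1:ℝ)/3) * ((Real.exp (y2 x))⁻¹ * Real.exp (y3 x)) ^ ((1:ℝ)/3)
    - 2 * Real.exp (y1 x) ^ (-(1:ℝ)/3) * (Real.exp (y2 x) * Real.exp (y3 x) ^ 2) ^ (-(1:ℝ)/3)
    + Real.exp (y1 x) ^ (-(1:ℝ)/3) * Real.exp (y2 x) ^ (-(4:ℝ)/3) * Real.exp (y3 x) ^ (-(2:ℝ)/3)
    + Real.exp (y1 x) ^ (-(1:ℝ)/3) * Real.exp (y2 x) ^ ((2:ℝ)/3) * Real.exp (y3 x) ^ (-(2:ℝ)/3)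
    + Real.exp (y1 x) ^ (-(1:ℝ)/3) * Real.exp (y2 x) ^ ((2:ℝ)/3) * Real.exp (y3 x) ^ ((4:ℝ)/3)

/-- The constraint quantity `Phi` of the generalized Berger Einstein ODE system. -/
noncomputable def GBergerPhi (y1 y2 y3 : ℝ → ℝ) (x : ℝ) : ℝ :=
  (deriv y1 x)^2 - ((deriv y2 x)^2 + deriv y2 x * deriv y3 x + (deriv y3 x)^2)
    - 12 * x⁻¹ * (1 + x^2) * (1 - x^2)⁻¹ * deriv y1 x
    + 48 * ((1 - x^2)⁻¹)^2 * GBergerF y1 y2 y3 x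

/-! The quantity `Phi` is the Hamiltonian constraint of the system. Writing `F` as a sum of
exponentials `bergerMonomial p q r` in `(y1, y2, y3)`, one has `∂F/∂y1 = (3 - F)/3`, and the
forcing terms of (G3), (G4) are `-(2∂F/∂y2 - ∂F/∂y3)/2` and `-(2∂F/∂y3 - ∂F/∂y2)/2`: up to the
factor `32(1-x²)⁻²` they are the gradient of `F` for the inverse of the kinetic form
`y2'² + y2'y3' + y3'²`. Hence, when `Phi` is differentiated and (G3), (G4) are substituted, the
forcing terms cancel against the derivative of `48(1-x²)⁻² F`; substituting (G2) as well leaves a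
rational identity in `x`, `y1'`, `y2'`, `y3'`, `F`. -/

/-- `K^{p/3} phi1^{q/3} phi2^{r/3}` for `K = exp u`, `phi1 = exp v`, `phi2 = exp w`. -/
noncomputable def bergerMonomial (p q r u v w : ℝ) : ℝ :=
  exp ((p * u + q * v + r * w) / 3)

noncomputable def bergerPotential (u v w : ℝ) : ℝ :=
  3 - 2 * bergerMonomial (-1) 2 1 u v w - 2 * bergerMonomial (-1) (-1) 1 u v w
    - 2 * bergerMonomial (-1) (-1) (-2) u v w + bergerMonomial (-1) (-4) (-2) u v w
    + bergerMonomial (-1) 2 (-2) u v w + bergerMonomial (-1) 2 4 u v w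

noncomputable def bergerForce₁ (u v w : ℝ) : ℝ :=
  bergerMonomial (-1) 2 1 u v w - bergerMonomial (-1) (-1) 1 u v w
    - bergerMonomial (-1) 2 (-2) u v w + bergerMonomial (-1) (-4) (-2) u v w

noncomputable def bergerForce₂ (u v w : ℝ) : ℝ :=
  bergerMonomial (-1) (-1) 1 u v w - bergerMonomial (-1) (-1) (-2) u v w
    - bergerMonomial (-1) 2 4 u v w + bergerMonomial (-1) 2 (-2) u v w

theorem GBergerF_eq_bergerPotential (y1 y2 y3 : ℝ → ℝ) (x : ℝ) :
    GBergerF y1 y2 y3 x = bergerPotential (y1 x) (y2 x) (y3 x) := by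
  simp only [GBergerF, bergerPotential, bergerMonomial, pow_two, ← exp_neg, ← exp_add, ← exp_mul]
  ring_nf
  simp only [← exp_add]
  ring_nf

theorem exp_rpow_mul_eq_bergerForce₁ (u v w : ℝ) :
    exp u ^ (-(1:ℝ)/3) *
      (exp v ^ ((2:ℝ)/3) * exp w ^ ((1:ℝ)/3) - exp v ^ (-(1:ℝ)/3) * exp w ^ ((1:ℝ)/3)
        - exp v ^ ((2:ℝ)/3) * exp w ^ (-(2:ℝ)/3) + exp v ^ (-(4:ℝ)/3) * exp w ^ (-(2:ℝ)/3))
      = bergerForce₁ u v w := by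
  simp only [bergerForce₁, bergerMonomial, mul_sub, mul_add, ← exp_add, ← exp_mul]
  ring_nf

theorem exp_rpow_mul_eq_bergerForce₂ (u v w : ℝ) :
    exp u ^ (-(1:ℝ)/3) *
      (exp v ^ (-(1:ℝ)/3) * exp w ^ ((1:ℝ)/3) - exp v ^ (-(1:ℝ)/3) * exp w ^ (-(2:ℝ)/3)
        - exp v ^ ((2:ℝ)/3) * exp w ^ ((4:ℝ)/3) + exp v ^ ((2:ℝ)/3) * exp w ^ (-(2:ℝ)/3))
      = bergerForce₂ u v w := by
  simp only [bergerForce₂, bergerMonomial, mul_sub, mul_add, ← exp_add, ← exp_mul]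
  ring_nf

section Curves

variable {f g h : ℝ → ℝ} {a b c x : ℝ}

theorem HasDerivAt.bergerMonomial (hf : HasDerivAt f a x) (hg : HasDerivAt g b x)
    (hh : HasDerivAt h c x) (p q r : ℝ) :
    HasDerivAt (fun t ↦ bergerMonomial p q r (f t) (g t) (h t))
      (bergerMonomial p q r (f x) (g x) (h x) * ((p * a + q * b + r * c) / 3)) x :=
  ((((hf.const_mul p).add (hg.const_mul q)).add (hh.const_mul r)).div_const 3).exp

theorem HasDerivAt.bergerPotential (hf : HasDerivAt f a x) (hg : HasDerivAt g b x)
    (hh : HasDerivAt h c x) :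
    HasDerivAt (fun t ↦ bergerPotential (f t) (g t) (h t))
      ((3 - bergerPotential (f x) (g x) (h x)) / 3 * a
        - 2 / 3 * ((2 * bergerForce₁ (f x) (g x) (h x) + bergerForce₂ (f x) (g x) (h x)) * b
          + (bergerForce₁ (f x) (g x) (h x) + 2 * bergerForce₂ (f x) (g x) (h x)) * c)) x := by
  have hm := hf.bergerMonomial hg hh
  refine (((((((hm (-1) 2 1).const_mul 2).const_sub 3).sub ((hm (-1) (-1) 1).const_mul 2)).sub
    ((hm (-1) (-1) (-2)).const_mul 2)).add (hm (-1) (-4) (-2))).add (hm (-1) 2 (-2))).add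
    (hm (-1) 2 4) |>.congr_deriv ?_
  simp only [_root_.bergerPotential, bergerForce₁, bergerForce₂]
  ring

end Curves

theorem hasDerivAt_GBergerPhi {y1 y2 y3 : ℝ → ℝ} {x a' b' c' F' : ℝ} (hx : x ≠ 0)
    (hx1 : 1 - x ^ 2 ≠ 0) (ha : HasDerivAt (deriv y1) a' x) (hb : HasDerivAt (deriv y2) b' x)
    (hc : HasDerivAt (deriv y3) c' x) (hF : HasDerivAt (GBergerF y1 y2 y3) F' x) :
    HasDerivAt (GBergerPhi y1 y2 y3)
      (2 * deriv y1 x * a'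
        - ((2 * deriv y2 x + deriv y3 x) * b' + (deriv y2 x + 2 * deriv y3 x) * c')
        - 12 * ((x ^ 4 + 4 * x ^ 2 - 1) / (x ^ 2 * (1 - x ^ 2) ^ 2) * deriv y1 x
          + x⁻¹ * (1 + x ^ 2) * (1 - x ^ 2)⁻¹ * a')
        + 48 * (4 * x / (1 - x ^ 2) ^ 3 * GBergerF y1 y2 y3 x + ((1 - x ^ 2)⁻¹) ^ 2 * F')) x := by
  have hsq : HasDerivAt (fun t : ℝ ↦ 1 - t ^ 2) (-(2 * x)) x := by
    simpa using (hasDerivAt_pow 2 x).const_sub 1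
  have hw := hsq.inv hx1
  have hp := (((hasDerivAt_inv hx).const_mul 12).mul ((hasDerivAt_pow 2 x).const_add 1)).mul hw
  refine (((ha.pow 2).sub (((hb.pow 2).add (hb.mul hc)).add (hc.pow 2))).sub (hp.mul ha)).add
    (((hw.pow 2).const_mul 48).mul hF) |>.congr_deriv ?_
  simp only [Pi.mul_apply, Pi.inv_apply, Pi.pow_apply, Nat.cast_ofNat, Nat.add_one_sub_one, pow_one]
  field_simp
  ring

/-- if (G2), (G3), (G4) hold on `(0,1)`, the constraint quantity `Phi`
is differentiable on `(0,1)` and satisfies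
`Phi' + (y1' − x⁻¹(4+8x²)(1−x²)⁻¹) Phi = 0`. -/
theorem generalized_berger_Phi_ode (y1 y2 y3 : ℝ → ℝ)
    (hd1 : ∀ t ∈ Ioo (0:ℝ) 1, DifferentiableAt ℝ y1 t)
    (hd1' : ∀ t ∈ Ioo (0:ℝ) 1, DifferentiableAt ℝ (deriv y1) t)
    (hd2 : ∀ t ∈ Ioo (0:ℝ) 1, DifferentiableAt ℝ y2 t)
    (hd2' : ∀ t ∈ Ioo (0:ℝ) 1, DifferentiableAt ℝ (deriv y2) t)
    (hd3 : ∀ t ∈ Ioo (0:ℝ) 1, DifferentiableAt ℝ y3 t)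
    (hd3' : ∀ t ∈ Ioo (0:ℝ) 1, DifferentiableAt ℝ (deriv y3) t)
    (hG2 : ∀ x ∈ Ioo (0:ℝ) 1,
      deriv (deriv y1) x - x⁻¹ * (5 + 7*x^2) * (1 - x^2)⁻¹ * deriv y1 x
        + (1/2) * (deriv y1 x)^2 + 16 * ((1 - x^2)⁻¹)^2 * GBergerF y1 y2 y3 x = 0)
    (hG3 : ∀ x ∈ Ioo (0:ℝ) 1,
      deriv (deriv y2) x - 2 * x⁻¹ * (1 + 2*x^2) * (1 - x^2)⁻¹ * deriv y2 x
        + (1/2) * deriv y1 x * deriv y2 x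
        + 32 * ((1 - x^2)⁻¹)^2 * Real.exp (y1 x) ^ (-(1:ℝ)/3) *
          (Real.exp (y2 x) ^ ((2:ℝ)/3) * Real.exp (y3 x) ^ ((1:ℝ)/3)
            - Real.exp (y2 x) ^ (-(1:ℝ)/3) * Real.exp (y3 x) ^ ((1:ℝ)/3)
            - Real.exp (y2 x) ^ ((2:ℝ)/3) * Real.exp (y3 x) ^ (-(2:ℝ)/3)
            + Real.exp (y2 x) ^ (-(4:ℝ)/3) * Real.exp (y3 x) ^ (-(2:ℝ)/3)) = 0)
    (hG4 : ∀ x ∈ Ioo (0:ℝ) 1,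
      deriv (deriv y3) x - 2 * x⁻¹ * (1 + 2*x^2) * (1 - x^2)⁻¹ * deriv y3 x
        + (1/2) * deriv y1 x * deriv y3 x
        + 32 * ((1 - x^2)⁻¹)^2 * Real.exp (y1 x) ^ (-(1:ℝ)/3) *
          (Real.exp (y2 x) ^ (-(1:ℝ)/3) * Real.exp (y3 x) ^ ((1:ℝ)/3)
            - Real.exp (y2 x) ^ (-(1:ℝ)/3) * Real.exp (y3 x) ^ (-(2:ℝ)/3)
            - Real.exp (y2 x) ^ ((2:ℝ)/3) * Real.exp (y3 x) ^ ((4:ℝ)/3)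
            + Real.exp (y2 x) ^ ((2:ℝ)/3) * Real.exp (y3 x) ^ (-(2:ℝ)/3)) = 0) :
    ∀ x ∈ Ioo (0:ℝ) 1,
      HasDerivAt (GBergerPhi y1 y2 y3)
        (-((deriv y1 x - x⁻¹ * (4 + 8*x^2) * (1 - x^2)⁻¹) * GBergerPhi y1 y2 y3 x)) x := by
  intro x hx
  have hx0 : x ≠ 0 := hx.1.ne'
  have hx1 : 1 - x ^ 2 ≠ 0 := by nlinarith [hx.1, hx.2]
  have hF := (hd1 x hx).hasDerivAt.bergerPotential (hd2 x hx).hasDerivAt (hd3 x hx).hasDerivAt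
  simp only [← GBergerF_eq_bergerPotential] at hF
  have h2 := hG2 x hx
  have h3 := hG3 x hx
  have h4 := hG4 x hx
  rw [mul_assoc (32 * _), exp_rpow_mul_eq_bergerForce₁] at h3
  rw [mul_assoc (32 * _), exp_rpow_mul_eq_bergerForce₂] at h4
  refine (hasDerivAt_GBergerPhi hx0 hx1 (hd1' x hx).hasDerivAt (hd2' x hx).hasDerivAt
    (hd3' x hx).hasDerivAt hF).congr_deriv ?_
  rw [GBergerPhi]
  -- the coefficients of `y1''`, `y2''`, `y3''` in the derivative of `Phi`
  linear_combination (norm := skip)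
    (2 * deriv y1 x - 12 * x⁻¹ * (1 + x ^ 2) * (1 - x ^ 2)⁻¹) * h2
      - (2 * deriv y2 x + deriv y3 x) * h3 - (deriv y2 x + 2 * deriv y3 x) * h4
  field_simp
  ring
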